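/- Let F be a field and a ∈ F×. Consider the set Ω_F ⊆ [-∞,∞]^F defined as cl(A) \ {-∞,0,∞}^F, where A is the set of all functions v : F → [-∞,∞] with v(0) = ∞, v(1) = 0, v(2) ≠ -∞, v(xy) = v(x)+v(y) whenever {v(x),v(y)} ≠ {-∞,∞}, and v(x+y) ≥ min(v(x),v(y)) + min(v(2),0), the closure being taken in the product topology of [-∞,∞]^F, and where {-∞,0,∞}^F denotes the functions valued only in {-∞,0,∞}. The multiplicative group ℝ_{>0} acts on Ω_F by pointwise scaling (with c·(±∞) = ±∞), and Ω̄_F denotes the quotient space Ω_F/ℝ_{>0} with the quotient topology. Then the subset Ω̄_F(a) ⊆ Ω̄_F consisting of the classes of those v ∈ Ω_F with 0 < v(a) < ∞ is Hausdorff in the subspace topology. -/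

import Mathlib

/-!
On the open, rescaling-invariant set `{v | 0 < v a < ⊤}` the normalization `v ↦ v / v a` is
continuous, constant on `ℝ_{>0}`-orbits and separates different orbits. It therefore descends to
a continuous injection of `Ω̄_F(a)` into the Hausdorff space `[-∞,∞]^F`.
-/

open scoped ENNReal

variable (F : Type*) [Field F]

/-- The set `A` of functions `v : F → [-∞,∞]` with `v 0 = ∞`, `v 1 = 0`, `v 2 ≠ -∞`,
`v (xy) = v x + v y` whenever the sum is defined, and
`v (x+y) ≥ min (v x) (v y) + min (v 2) 0`. -/
def preValSet : Set (F → EReal) :=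
  {v | v 0 = ⊤ ∧ v 1 = 0 ∧ v 2 ≠ ⊥ ∧
    (∀ x y, ¬((v x = ⊥ ∧ v y = ⊤) ∨ (v x = ⊤ ∧ v y = ⊥)) → v (x * y) = v x + v y) ∧
    ∀ x y, min (v x) (v y) + min (v 2) 0 ≤ v (x + y)}

/-- The space `Ω_F`: the closure of `A` in the product space `[-∞,∞]^F`, minus the
functions valued in `{-∞,0,∞}`. -/
def OmegaF : Set (F → EReal) :=
  closure (preValSet F) \ {v | ∀ x, v x ∈ ({⊥, 0, ⊤} : Set EReal)}

/-- The relation of being a positive real scalar multiple (pointwise, with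
`c·(±∞) = ±∞`) on `Ω_F`. -/
def omegaRel (v w : OmegaF F) : Prop :=
  ∃ c : ℝ, 0 < c ∧ ∀ x, (w : F → EReal) x = (c : EReal) * (v : F → EReal) x

/-- `Ω̄_F = Ω_F / ℝ_{>0}` carries the quotient topology. -/
noncomputable instance : TopologicalSpace (Quot (omegaRel F)) :=
  TopologicalSpace.coinduced (Quot.mk (omegaRel F)) inferInstance

open Set Topology

theorem Topology.IsQuotientMap.t2Space_of_isOpen {X Q Y : Type*} [TopologicalSpace X]
    [TopologicalSpace Q] [TopologicalSpace Y] [T2Space Y] {π : X → Q} (hπ : IsQuotientMap π)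
    {s : Set Q} (hs : IsOpen s) {f : X → Y} (hf : ContinuousOn f (π ⁻¹' s))
    (hfπ : ∀ v ∈ π ⁻¹' s, ∀ w ∈ π ⁻¹' s, f v = f w ↔ π v = π w) : T2Space s := by
  choose rep hrep using fun q : s => hπ.surjective q
  have hrep_mem (q : s) : rep q ∈ π ⁻¹' s := by
    rw [mem_preimage, hrep]
    exact q.2
  have hlift : (fun q => f (rep q)) ∘ s.restrictPreimage π = (π ⁻¹' s).domRestrict f := by
    ext v
    exact (hfπ _ (hrep_mem _) _ v.2).2 (hrep _)
  refine .of_injective_continuous (f := fun q => f (rep q)) (fun q q' h => ?_) ?_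
  · apply Subtype.ext
    rw [← hrep q, ← hrep q']
    exact (hfπ _ (hrep_mem q) _ (hrep_mem q')).1 h
  · rw [(hπ.restrictPreimage_isOpen hs).continuous_iff, hlift]
    exact hf.domRestrict

namespace EReal

variable {ι : Type*}

noncomputable def normalizeAt (a : ι) (v : ι → EReal) : ι → EReal :=
  fun x => (((v a).toReal⁻¹ : ℝ) : EReal) * v x

lemma toReal_pos_of_mem_Ioo {t : EReal} (ht : t ∈ Ioo 0 ⊤) : 0 < t.toReal :=
  toReal_pos ht.1 ht.2.ne

lemma coe_mul_mem_Ioo {c : ℝ} (hc : 0 < c) {t : EReal} (ht : t ∈ Ioo 0 ⊤) :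
    (c : EReal) * t ∈ Ioo 0 ⊤ := by
  rw [← coe_toReal ht.2.ne (ht.1.ne_bot), ← coe_mul]
  exact ⟨EReal.coe_pos.2 (mul_pos hc (toReal_pos_of_mem_Ioo ht)), coe_lt_top _⟩

lemma normalizeAt_coe_mul {a : ι} {v : ι → EReal} (hv : v a ∈ Ioo 0 ⊤) {c : ℝ} (hc : 0 < c) :
    normalizeAt a (fun x => (c : EReal) * v x) = normalizeAt a v := by
  have hva : v a = ((v a).toReal : EReal) := (coe_toReal hv.2.ne hv.1.ne_bot).symm
  funext x
  rw [normalizeAt, normalizeAt, hva, ← coe_mul, toReal_coe, ← hva, ← mul_assoc, ← coe_mul]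
  congr 2
  field_simp

lemma normalizeAt_eq_iff {a : ι} {v w : ι → EReal} (hv : v a ∈ Ioo 0 ⊤) (hw : w a ∈ Ioo 0 ⊤) :
    normalizeAt a v = normalizeAt a w ↔ ∃ c : ℝ, 0 < c ∧ ∀ x, w x = (c : EReal) * v x := by
  refine ⟨fun h => ⟨(w a).toReal * (v a).toReal⁻¹,
    mul_pos (toReal_pos_of_mem_Ioo hw) (inv_pos.2 (toReal_pos_of_mem_Ioo hv)), fun x => ?_⟩, ?_⟩
  · rw [coe_mul, mul_assoc, ← normalizeAt, h, normalizeAt, ← mul_assoc, ← coe_mul,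
      mul_inv_cancel₀ (toReal_pos_of_mem_Ioo hw).ne', coe_one, one_mul]
  · rintro ⟨c, hc, hwv⟩
    rw [show w = fun x => (c : EReal) * v x from funext hwv, normalizeAt_coe_mul hv hc]

lemma continuousOn_normalizeAt (a : ι) :
    ContinuousOn (normalizeAt a) {v : ι → EReal | v a ∈ Ioo 0 ⊤} := by
  have hscale : ContinuousOn (fun v : ι → EReal => (v a).toReal⁻¹) {v | v a ∈ Ioo 0 ⊤} :=
    (continuousOn_toReal.comp (continuous_apply a).continuousOn
      fun v hv => by simp [hv.1.ne_bot, hv.2.ne]).inv₀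
      fun v hv => (toReal_pos_of_mem_Ioo hv).ne'
  refine continuousOn_pi.2 fun x v hv => ?_
  have hmul : ContinuousAt (fun p : EReal × EReal => p.1 * p.2)
      (((v a).toReal⁻¹ : ℝ), v x) := by
    have h0 : (((v a).toReal⁻¹ : ℝ) : EReal) ≠ 0 :=
      coe_ne_zero.2 (inv_ne_zero (toReal_pos_of_mem_Ioo hv).ne')
    exact continuousAt_mul (.inl h0) (.inl h0) (.inl (coe_ne_bot _)) (.inl (coe_ne_top _))
  exact ContinuousAt.comp_continuousWithinAt (x := v) hmul
    ((continuous_coe_real_ereal.comp_continuousOn hscale v hv).prodMk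
      (continuous_apply x).continuousWithinAt)

end EReal

open EReal

section Omega

lemma omegaRel_equivalence : Equivalence (omegaRel F) where
  refl v := ⟨1, one_pos, fun x => by rw [EReal.coe_one, one_mul]⟩
  symm := by
    rintro v w ⟨c, hc, h⟩
    refine ⟨c⁻¹, inv_pos.2 hc, fun x => ?_⟩
    rw [h x, ← mul_assoc, ← EReal.coe_mul, inv_mul_cancel₀ hc.ne', EReal.coe_one, one_mul]
  trans := by
    rintro u v w ⟨c, hc, h⟩ ⟨d, hd, h'⟩
    exact ⟨d * c, mul_pos hd hc, fun x => by rw [h' x, h x, ← mul_assoc, ← EReal.coe_mul]⟩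

variable {F}

lemma quot_mk_omegaRel_eq_iff {v w : OmegaF F} :
    Quot.mk (omegaRel F) v = Quot.mk (omegaRel F) w ↔ omegaRel F v w :=
  Quot.eq.trans (omegaRel_equivalence F).eqvGen_iff

lemma preimage_image_quot_mk_omegaRel (a : F) :
    Quot.mk (omegaRel F) ⁻¹'
        (Quot.mk (omegaRel F) '' {v : OmegaF F | 0 < (v : F → EReal) a ∧ (v : F → EReal) a < ⊤}) =
      {v : OmegaF F | 0 < (v : F → EReal) a ∧ (v : F → EReal) a < ⊤} := by
  refine (subset_preimage_image _ _).antisymm' ?_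
  rintro w ⟨v, hv, hvw⟩
  obtain ⟨c, hc, hwv⟩ := quot_mk_omegaRel_eq_iff.1 hvw
  change (w : F → EReal) a ∈ Ioo 0 ⊤
  rw [hwv]
  exact coe_mul_mem_Ioo hc hv

end Omega

theorem omegaBar_a_t2Space (a : F) :
    T2Space {q : Quot (omegaRel F) //
      q ∈ Quot.mk (omegaRel F) ''
        {v : OmegaF F | 0 < (v : F → EReal) a ∧ (v : F → EReal) a < ⊤}} := by
  have hπ : IsQuotientMap (Quot.mk (omegaRel F)) := isQuotientMap_quot_mk
  have hsat := preimage_image_quot_mk_omegaRel a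
  refine hπ.t2Space_of_isOpen (f := fun v => normalizeAt a v) ?_ ?_ ?_
  · rw [← hπ.isOpen_preimage, hsat]
    exact isOpen_Ioo.preimage ((continuous_apply a).comp continuous_subtype_val)
  · rw [hsat]
    exact (continuousOn_normalizeAt a).comp continuous_subtype_val.continuousOn fun _ hv => hv
  · rw [hsat]
    exact fun v hv w hw => (normalizeAt_eq_iff hv hw).trans quot_mk_omegaRel_eq_iff.symm
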